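/- Let Ω ⊂ ℝ² be bounded open smooth, x ∈ Ω, G_{Ω,x} the Green's function with singularity at x, and I_Ω(x) = e^{−2π H_{Ω,x}(x)} the conformal incenter, where H_{Ω,x} is the regular part of G_{Ω,x}. Then lim_{t→∞} |{y ∈ Ω : G_{Ω,x}(y) > t}| / e^{−4πt} = π (I_Ω(x))², where |·| denotes 2-dimensional Lebesgue measure. -/

import Mathlib

noncomputable section

open MeasureTheory Real Filter Topology Metric

abbrev E2 := EuclideanSpace ℝ (Fin 2)

/-- The unit ball in the plane. -/
def B1 : Set E2 := Metric.ball 0 1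

/-- Dirichlet energy of `u` on `Ω`. -/
def dirE (Ω : Set E2) (u : E2 → ℝ) : ℝ := ∫ x in Ω, ‖gradient u x‖ ^ 2

/-- Membership in the Sobolev space `W₀^{1,2}(Ω)`: `u` can be approximated arbitrarily well
in the `W^{1,2}` norm by smooth functions compactly supported in `Ω`. -/
def MemW120 (Ω : Set E2) (u : E2 → ℝ) : Prop :=
  ∀ ε > 0, ∃ φ : E2 → ℝ, ContDiff ℝ (⊤ : ℕ∞) φ ∧ HasCompactSupport φ ∧ tsupport φ ⊆ Ω ∧
    (∫ x in Ω, ((u x - φ x) ^ 2 + ‖gradient u x - gradient φ x‖ ^ 2)) < ε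

/-- The singular Moser-Trudinger functional `F_Ω(u) = ∫_Ω (e^{α u²} - 1)/|x|^β`. -/
def FF (α β : ℝ) (Ω : Set E2) (u : E2 → ℝ) : ℝ :=
  ∫ x in Ω, (Real.exp (α * u x ^ 2) - 1) / ‖x‖ ^ β

/-- The classical Moser-Trudinger functional `J_Ω(u) = ∫_Ω (e^{4π u²} - 1)`. -/
def JJ (Ω : Set E2) (u : E2 → ℝ) : ℝ :=
  ∫ x in Ω, (Real.exp (4 * π * u x ^ 2) - 1)

/-- A sequence concentrates at `x₀`: the Dirichlet energies tend to `1` and all the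
energy escapes into arbitrarily small balls around `x₀`. -/
def Concentrates (Ω : Set E2) (u : ℕ → E2 → ℝ) (x₀ : E2) : Prop :=
  Tendsto (fun i => dirE Ω (u i)) atTop (𝓝 1) ∧
  ∀ ε > 0, Tendsto (fun i => ∫ x in Ω \ Metric.ball x₀ ε, ‖gradient (u i) x‖ ^ 2)
    atTop (𝓝 0)

/-- `F_Ω^{sup}`: the supremum of `F_Ω` over the unit Dirichlet ball of `W₀^{1,2}(Ω)`. -/
def Fsup (α β : ℝ) (Ω : Set E2) : ℝ :=
  sSup {c | ∃ u : E2 → ℝ, MemW120 Ω u ∧ dirE Ω u ≤ 1 ∧ c = FF α β Ω u}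

/-- `F_Ω^δ(x₀)`: the concentration level of `F_Ω` at `x₀`. -/
def Fdelta (α β : ℝ) (Ω : Set E2) (x₀ : E2) : ℝ :=
  sSup {c | ∃ u : ℕ → E2 → ℝ, (∀ i, MemW120 Ω (u i) ∧ dirE Ω (u i) ≤ 1) ∧
    Concentrates Ω u x₀ ∧ c = limsup (fun i => FF α β Ω (u i)) atTop}

/-- The Laplacian of `f : ℝ² → ℝ`. -/
def lap (f : E2 → ℝ) (y : E2) : ℝ :=
  ∑ i : Fin 2, fderiv ℝ (fun z => fderiv ℝ f z (EuclideanSpace.single i 1)) y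
    (EuclideanSpace.single i 1)

/-- `(G, H)` is the Green's function of `Ω` with pole at `x`, together with its regular
part `H`: `G(y) = -(1/2π) log|y - x| - H(y)`, `H` is harmonic in `Ω` and continuous up to
the boundary, and `G` vanishes on the boundary of `Ω`. -/
def IsGreen (Ω : Set E2) (x : E2) (G H : E2 → ℝ) : Prop :=
  ContDiffOn ℝ (⊤ : ℕ∞) H Ω ∧ (∀ y ∈ Ω, lap H y = 0) ∧ ContinuousOn H (closure Ω) ∧
  (∀ y, G y = -(1 / (2 * π)) * Real.log ‖y - x‖ - H y) ∧
  (∀ y ∈ frontier Ω, G y = 0)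

/-- A radially symmetric function. -/
def IsRadial (u : E2 → ℝ) : Prop := ∀ x y : E2, ‖x‖ = ‖y‖ → u x = u y

/-- The point at distance `r` from the origin on the first coordinate axis. -/
def pt (r : ℝ) : E2 := r • EuclideanSpace.single (0 : Fin 2) (1 : ℝ)

/-- The Adimurthi-Sandeep transformation `T_a(u)(x) = √a · u(|x|^{1/a})` on radial
functions. -/
def Ta (a : ℝ) (u : E2 → ℝ) (x : E2) : ℝ := Real.sqrt a * u (pt (‖x‖ ^ (1 / a)))

/-- A sequence of sets consists of approximately small disks at `x` of radii `τ i`. -/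
def ApproxSmallDisks (A : ℕ → Set E2) (x : E2) : Prop :=
  ∃ τ σ : ℕ → ℝ, (∀ i, 0 < τ i ∧ 0 < σ i) ∧ Tendsto τ atTop (𝓝 0) ∧
    Tendsto (fun i => σ i / τ i) atTop (𝓝 0) ∧
    ∀ᶠ i in atTop, Metric.ball x (τ i - σ i) ⊆ A i ∧ A i ⊆ Metric.ball x (τ i + σ i)
private lemma vol_ball2 (x : E2) (r : ℝ) (hr : 0 ≤ r) :
    volume (Metric.ball x r) = ENNReal.ofReal (π * r ^ 2) := by
  rw [EuclideanSpace.volume_ball]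
  rw [Fintype.card_fin]
  rw [show ((2:ℕ):ℝ)/2 + 1 = 2 by norm_num, Real.Gamma_two]
  rw [← ENNReal.ofReal_pow hr, ← ENNReal.ofReal_mul (by positivity)]
  congr 1
  rw [sq_sqrt pi_pos.le]
  ring

/-- asymptotics of the measure of superlevel sets of the Green's function,
giving the conformal incenter `I_Ω(x) = e^{-2π H_{Ω,x}(x)}`. -/
theorem green_superlevel_measure_asymptotics
    (Ω : Set E2) (hΩo : IsOpen Ω) (hΩb : Bornology.IsBounded Ω)
    (x : E2) (hx : x ∈ Ω) (G H : E2 → ℝ) (hG : IsGreen Ω x G H) :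
    Tendsto (fun t : ℝ => (volume {y ∈ Ω | t < G y}).toReal / Real.exp (-(4 * π * t)))
      atTop (𝓝 (π * Real.exp (-(2 * π * H x)) ^ 2)) := by
  obtain ⟨hHdiff, hHharm, hHcont, hGdef, hGbd⟩ := hG
  have hπ : (0:ℝ) < π := Real.pi_pos
  set L : ℝ := π * Real.exp (-(2 * π * H x)) ^ 2 with hL
  have hLpos : 0 < L := by positivity
  have hLexp : L = π * Real.exp (-(4 * π * H x)) := by
    rw [hL, sq, ← Real.exp_add]; ring_nf
  -- continuity of H at x
  have hHx : ContinuousAt H x :=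
    hHcont.continuousAt (Filter.mem_of_superset (hΩo.mem_nhds hx) subset_closure)
  -- bound of H on the closure
  obtain ⟨M, hM⟩ := hΩb.isCompact_closure.exists_bound_of_continuousOn hHcont
  simp only [Real.norm_eq_abs] at hM
  rw [Metric.tendsto_nhds]
  intro ε' hε'
  -- choose ε > 0 small
  have hup : Tendsto (fun s : ℝ => L * Real.exp (4 * π * s)) (𝓝[>] 0) (𝓝 L) := by
    have : ContinuousAt (fun s : ℝ => L * Real.exp (4 * π * s)) 0 := by fun_prop
    simpa using this.continuousWithinAt.tendsto
  have hlo : Tendsto (fun s : ℝ => L * Real.exp (-(4 * π * s))) (𝓝[>] 0) (𝓝 L) := by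
    have : ContinuousAt (fun s : ℝ => L * Real.exp (-(4 * π * s))) 0 := by fun_prop
    simpa using this.continuousWithinAt.tendsto
  obtain ⟨ε, h1, h2, hε⟩ :
      ∃ ε : ℝ, L * Real.exp (4 * π * ε) < L + ε' ∧ L - ε' < L * Real.exp (-(4 * π * ε)) ∧
        0 < ε := by
    have := (hup.eventually_lt_const (show L < L + ε' by linarith)).and
      ((hlo.eventually_const_lt (show L - ε' < L by linarith)).and self_mem_nhdsWithin)
    obtain ⟨ε, hA, hB, hC⟩ := this.exists
    exact ⟨ε, hA, hB, hC⟩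
  -- choose δ > 0
  obtain ⟨δ, hδ, hδball⟩ : ∃ δ > 0, ∀ y, dist y x < δ → |H y - H x| < ε ∧ y ∈ Ω := by
    have h3 : ∀ᶠ y in 𝓝 x, |H y - H x| < ε := by
      have := Metric.tendsto_nhds.mp hHx ε hε
      simpa [Real.dist_eq] using this
    have h4 : ∀ᶠ y in 𝓝 x, y ∈ Ω := hΩo.eventually_mem hx
    obtain ⟨δ, hδ, hb⟩ := Metric.eventually_nhds_iff.mp (h3.and h4)
    exact ⟨δ, hδ, fun y hy => hb hy⟩
  -- eventually conditions on t
  have e3 : ∀ᶠ t : ℝ in atTop, Real.exp (-(2 * π * (t + H x - ε))) < δ := by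
    have htend : Tendsto (fun t : ℝ => Real.exp (-(2 * π * (t + H x - ε)))) atTop (𝓝 0) := by
      apply Real.tendsto_exp_atBot.comp
      apply tendsto_neg_atTop_atBot.comp
      have hlin : Tendsto (fun t : ℝ => t + H x - ε) atTop atTop := by
        simpa [sub_eq_add_neg, add_assoc] using
          tendsto_atTop_add_const_right atTop (H x + -ε) (tendsto_id (α := ℝ))
      exact hlin.const_mul_atTop (by positivity)
    exact htend.eventually_lt_const hδ
  filter_upwards [eventually_gt_atTop (-(1 / (2 * π)) * Real.log δ + M),
    eventually_gt_atTop |H x|, e3] with t ht0 htH htδ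
  set r₁ : ℝ := Real.exp (-(2 * π * (t + H x + ε))) with hr₁
  set r₂ : ℝ := Real.exp (-(2 * π * (t + H x - ε))) with hr₂
  have hr₁pos : 0 < r₁ := Real.exp_pos _
  have hr₂pos : 0 < r₂ := Real.exp_pos _
  have hr12 : r₁ ≤ r₂ := Real.exp_le_exp.2 (by nlinarith)
  set S : Set E2 := {y ∈ Ω | t < G y} with hS
  -- upper inclusion
  have hSub : S ⊆ Metric.ball x r₂ := by
    rintro y ⟨hyΩ, hyt⟩
    have hyδ : dist y x < δ := by
      by_contra hcon
      push_neg at hcon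
      have hlog : Real.log δ ≤ Real.log ‖y - x‖ := by
        apply Real.log_le_log hδ
        rwa [← dist_eq_norm]
      have hHy : |H y| ≤ M := hM y (subset_closure hyΩ)
      have : G y ≤ -(1 / (2 * π)) * Real.log δ + M := by
        rw [hGdef y]
        have h5 : -(1 / (2 * π)) * Real.log ‖y - x‖ ≤ -(1 / (2 * π)) * Real.log δ := by
          apply mul_le_mul_of_nonpos_left hlog
          simp only [Left.neg_nonpos_iff]
          positivity
        have h6 : -H y ≤ M := by cases abs_le.mp hHy; linarith
        linarith
      linarith
    obtain ⟨hHyε, _⟩ := hδball y hyδ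
    have hyne : y ≠ x := by
      intro hcon
      rw [hcon, hGdef x] at hyt
      simp at hyt
      have : -H x ≤ |H x| := neg_le_abs _
      linarith
    have hnorm : 0 < ‖y - x‖ := by
      rw [norm_pos_iff, sub_ne_zero]; exact hyne
    rw [hGdef y] at hyt
    have habs := abs_lt.mp hHyε
    have hlt : Real.log ‖y - x‖ < -(2 * π * (t + H x - ε)) := by
      have h7 : 2 * π * t < 2 * π * (-(1 / (2 * π)) * Real.log ‖y - x‖ - H y) :=
        (mul_lt_mul_iff_right₀ (by positivity)).2 hyt
      have h8 : 2 * π * (-(1 / (2 * π)) * Real.log ‖y - x‖) = -Real.log ‖y - x‖ := by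
        field_simp
      nlinarith [habs.1]
    rw [mem_ball, dist_eq_norm]
    calc ‖y - x‖ = Real.exp (Real.log ‖y - x‖) := (Real.exp_log hnorm).symm
      _ < r₂ := Real.exp_lt_exp.2 hlt
  -- lower inclusion
  have hSup : Metric.ball x r₁ \ {x} ⊆ S := by
    rintro y ⟨hyb, hyne⟩
    simp only [Set.mem_singleton_iff] at hyne
    rw [mem_ball, dist_eq_norm] at hyb
    have hyδ : dist y x < δ := by
      rw [dist_eq_norm]; calc ‖y - x‖ < r₁ := hyb
        _ ≤ r₂ := hr12
        _ < δ := htδ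
    obtain ⟨hHyε, hyΩ⟩ := hδball y hyδ
    refine ⟨hyΩ, ?_⟩
    have hnorm : 0 < ‖y - x‖ := by
      rw [norm_pos_iff, sub_ne_zero]; exact hyne
    have hlog : Real.log ‖y - x‖ < -(2 * π * (t + H x + ε)) := by
      calc Real.log ‖y - x‖ < Real.log r₁ := Real.log_lt_log hnorm hyb
        _ = -(2 * π * (t + H x + ε)) := Real.log_exp _
    rw [hGdef y]
    have habs := abs_lt.mp hHyε
    have h9 : -(1 / (2 * π)) * Real.log ‖y - x‖ > t + H x + ε := by
      have h10 : -(1 / (2 * π)) * (-(2 * π * (t + H x + ε))) = t + H x + ε := by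
        field_simp
      have h11 : -(1 / (2 * π)) < 0 := by
        have : (0:ℝ) < 1 / (2 * π) := by positivity
        linarith
      have h12 := mul_lt_mul_of_neg_left hlog h11
      rw [h10] at h12
      linarith
    linarith
  -- measure estimates
  have hvolUp : volume S ≤ ENNReal.ofReal (π * r₂ ^ 2) := by
    rw [← vol_ball2 x r₂ hr₂pos.le]
    exact measure_mono hSub
  have hvolLow : ENNReal.ofReal (π * r₁ ^ 2) ≤ volume S := by
    rw [← vol_ball2 x r₁ hr₁pos.le]
    rw [← measure_diff_null (s := Metric.ball x r₁) (measure_singleton x)]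
    exact measure_mono hSup
  have hfin : volume S ≠ ⊤ := ne_top_of_le_ne_top ENNReal.ofReal_ne_top hvolUp
  set V : ℝ := (volume S).toReal with hV
  have hVup : V ≤ π * r₂ ^ 2 := by
    have := ENNReal.toReal_mono ENNReal.ofReal_ne_top hvolUp
    rwa [ENNReal.toReal_ofReal (by positivity)] at this
  have hVlow : π * r₁ ^ 2 ≤ V := by
    have := ENNReal.toReal_mono hfin hvolLow
    rwa [ENNReal.toReal_ofReal (by positivity)] at this
  -- arithmetic
  have e4 : ∀ s : ℝ, π * Real.exp (-(2 * π * (t + H x + s))) ^ 2 =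
      (L * Real.exp (-(4 * π * s))) * Real.exp (-(4 * π * t)) := by
    intro s
    rw [sq, ← Real.exp_add,
      show -(2 * π * (t + H x + s)) + -(2 * π * (t + H x + s)) =
        -(4 * π * H x) + (-(4 * π * s) + -(4 * π * t)) by ring,
      Real.exp_add, Real.exp_add, hLexp]
    ring
  have hexpt : (0:ℝ) < Real.exp (-(4 * π * t)) := Real.exp_pos _
  have hfl : L * Real.exp (-(4 * π * ε)) ≤ V / Real.exp (-(4 * π * t)) := by
    rw [le_div_iff₀ hexpt]
    calc L * Real.exp (-(4 * π * ε)) * Real.exp (-(4 * π * t)) = π * r₁ ^ 2 := (e4 ε).symm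
      _ ≤ V := hVlow
  have hfh : V / Real.exp (-(4 * π * t)) ≤ L * Real.exp (4 * π * ε) := by
    rw [div_le_iff₀ hexpt]
    calc V ≤ π * r₂ ^ 2 := hVup
      _ = L * Real.exp (-(4 * π * (-ε))) * Real.exp (-(4 * π * t)) := by
          rw [hr₂, show -(2 * π * (t + H x - ε)) = -(2 * π * (t + H x + (-ε))) by ring,
            e4 (-ε)]
      _ = L * Real.exp (4 * π * ε) * Real.exp (-(4 * π * t)) := by
          rw [show -(4 * π * (-ε)) = 4 * π * ε by ring]
  rw [Real.dist_eq, abs_sub_lt_iff]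
  constructor <;> linarith
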